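/- arXiv:1312.2172 — 3 statements merged into one kernel-verified Lean document; each statement's English description precedes it below -/
import Mathlib

section
/- Let q be a real number with 0 < q < 1, let v be a nonzero integer, and let t be a positive rational number. Define f : ℂ∖{0} → ℂ by f(a) = (a^v; q^t)_∞ · (q^t a^{−v}; q^t)_∞, where q^t denotes the real power. Suppose there exist integers α and w, a number ρ ∈ {0,1}, and a rational number s such that f(a q^α) = (−1)^ρ · a^{−w} · q^{−s} · f(a) for all a ∈ ℂ∖{0}. Then v divides w, and there exists an integer n with α·v = n·t (i.e., αv is an integer multiple of t). -/
/-- The q-Pochhammer symbol of infinite order: `(x; Q)_∞ = ∏_{k=0}^∞ (1 - x Q^k)`. -/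
noncomputable def qPoch (x Q : ℂ) : ℂ := ∏' k : ℕ, (1 - x * Q ^ k)

/-- The one-variable theta function `f(a) = (a^v; q^t)_∞ (q^t a^{-v}; q^t)_∞`,
where `q^t` is the real power. -/
noncomputable def thetaOne (q : ℝ) (t : ℚ) (v : ℤ) (a : ℂ) : ℂ :=
  qPoch (a ^ v) ((q ^ (t : ℝ) : ℝ) : ℂ)
    * qPoch (((q ^ (t : ℝ) : ℝ) : ℂ) * a ^ (-v)) ((q ^ (t : ℝ) : ℝ) : ℂ)


/-!
The zeros of `f` are exactly the `a` with `a^v ∈ (q^t)^ℤ`, and `f` is invariant under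
`a ↦ a ζ` for every `v`-th root of unity `ζ`. Comparing the contiguous relation at `a` and at
`a ζ`, for some `a` with `f a ≠ 0`, gives `ζ^w = 1` for all such `ζ`, hence `v ∣ w`. Since
`f 1 = 0`, the relation at `a = q^{-α}` forces `f (q^{-α}) = 0`, so `q^{-α v}` is an integral
power of `q^t`.
-/

open Complex Real

lemma qPoch_eq_zero_iff (x : ℂ) {Q : ℂ} (hQ : ‖Q‖ < 1) :
    qPoch x Q = 0 ↔ ∃ k : ℕ, x * Q ^ k = 1 := by
  refine ⟨fun h => ?_, fun ⟨k, hk⟩ => tprod_of_exists_eq_zero ⟨k, by rw [hk, sub_self]⟩⟩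
  by_contra! hne
  have hsum : Summable fun k : ℕ => ‖-(x * Q ^ k)‖ := by
    simpa [norm_mul, norm_pow] using
      (summable_geometric_of_lt_one (norm_nonneg Q) hQ).mul_left ‖x‖
  refine tprod_one_add_ne_zero_of_summable (fun k => ?_) hsum ?_
  · rw [← sub_eq_add_neg, sub_ne_zero]
    exact (hne k).symm
  · rw [qPoch] at h
    simpa only [← sub_eq_add_neg] using h

lemma qPoch_mul_qPoch_eq_zero_iff {Q y : ℂ} (hQ0 : Q ≠ 0) (hQ1 : ‖Q‖ < 1) (hy : y ≠ 0) :
    qPoch y Q * qPoch (Q * y⁻¹) Q = 0 ↔ ∃ m : ℤ, y = Q ^ m := by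
  have hfirst (k : ℕ) : y * Q ^ k = 1 ↔ y = Q ^ (-(k : ℤ)) := by
    rw [zpow_neg, zpow_natCast, mul_eq_one_iff_eq_inv₀ (pow_ne_zero k hQ0)]
  have hsecond (k : ℕ) : Q * y⁻¹ * Q ^ k = 1 ↔ y = Q ^ ((k : ℤ) + 1) := by
    rw [zpow_add_one₀ hQ0, zpow_natCast, mul_right_comm, mul_comm Q, mul_inv_eq_one₀ hy,
      eq_comm]
  rw [mul_eq_zero, qPoch_eq_zero_iff _ hQ1, qPoch_eq_zero_iff _ hQ1]
  simp only [hfirst, hsecond]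
  constructor
  · rintro (⟨k, hk⟩ | ⟨k, hk⟩) <;> exact ⟨_, hk⟩
  · rintro ⟨m, rfl⟩
    obtain ⟨k, rfl | rfl⟩ := Int.eq_nat_or_neg m
    · rcases k with _ | k
      · exact Or.inl ⟨0, by simp⟩
      · exact Or.inr ⟨k, by push_cast; rfl⟩
    · exact Or.inl ⟨k, rfl⟩

lemma thetaOne_eq_zero_iff {q : ℝ} (hq0 : 0 < q) (hq1 : q < 1) {t : ℚ} (ht : 0 < t)
    (v : ℤ) {a : ℂ} (ha : a ≠ 0) :
    thetaOne q t v a = 0 ↔ ∃ m : ℤ, a ^ v = ((q ^ (t : ℝ) : ℝ) : ℂ) ^ m := by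
  have hQ0 : 0 < q ^ (t : ℝ) := Real.rpow_pos_of_pos hq0 _
  have hQ1 : q ^ (t : ℝ) < 1 := Real.rpow_lt_one hq0.le hq1 (by exact_mod_cast ht)
  rw [thetaOne, zpow_neg]
  refine qPoch_mul_qPoch_eq_zero_iff (by exact_mod_cast hQ0.ne') ?_ (zpow_ne_zero v ha)
  rwa [norm_real, Real.norm_of_nonneg hQ0.le]

lemma thetaOne_one (q : ℝ) (t : ℚ) (v : ℤ) : thetaOne q t v 1 = 0 := by
  rw [thetaOne, one_zpow, qPoch, tprod_of_exists_eq_zero ⟨0, by simp⟩, zero_mul]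

lemma exists_thetaOne_ne_zero {q : ℝ} (hq0 : 0 < q) (hq1 : q < 1) {t : ℚ} (ht : 0 < t)
    {v : ℤ} (hv : v ≠ 0) : ∃ a : ℂ, a ≠ 0 ∧ thetaOne q t v a ≠ 0 := by
  refine ⟨exp (π * I / v), exp_ne_zero _, ?_⟩
  have hpow : exp (π * I / v) ^ v = -1 := by
    rw [← exp_int_mul, mul_div_cancel₀ _ (by exact_mod_cast hv), exp_pi_mul_I]
  rw [Ne, thetaOne_eq_zero_iff hq0 hq1 ht v (exp_ne_zero _), hpow]
  rintro ⟨m, hm⟩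
  have hpos : 0 < (q ^ (t : ℝ)) ^ m := zpow_pos (Real.rpow_pos_of_pos hq0 _) m
  rw [← ofReal_zpow, ← ofReal_one, ← ofReal_neg, ofReal_inj] at hm
  linarith

lemma thetaOne_mul_of_zpow_eq_one (q : ℝ) (t : ℚ) (v : ℤ) {ζ : ℂ} (hζ : ζ ^ v = 1) (a : ℂ) :
    thetaOne q t v (a * ζ) = thetaOne q t v a := by
  have hζ' : ζ ^ (-v) = 1 := by rw [zpow_neg, hζ, inv_one]
  rw [thetaOne, thetaOne, mul_zpow, mul_zpow, hζ, hζ', mul_one, mul_one]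

lemma zpow_eq_one_of_quasiperiodic {K : Type*} [Field K] {f : K → K} {c C ζ a : K} {w : ℤ}
    (hper : ∀ x, f (x * ζ) = f x) (hrel : ∀ x, x ≠ 0 → f (x * c) = C * x ^ (-w) * f x)
    (hC : C ≠ 0) (hζ : ζ ≠ 0) (ha : a ≠ 0) (hfa : f a ≠ 0) : ζ ^ w = 1 := by
  have h := hrel (a * ζ) (mul_ne_zero ha hζ)
  rw [mul_right_comm, hper, hper, hrel a ha, mul_zpow] at h
  have h' : C * a ^ (-w) * f a * (ζ ^ (-w) - 1) = 0 := by linear_combination -h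
  simpa [hC, ha, hfa, sub_eq_zero, zpow_ne_zero] using h'

lemma Int.dvd_of_forall_zpow_eq_one_imp {v w : ℤ} (hv : v ≠ 0)
    (h : ∀ ζ : ℂ, ζ ^ v = 1 → ζ ^ w = 1) : v ∣ w := by
  have hprim := isPrimitiveRoot_exp v.natAbs (Int.natAbs_ne_zero.2 hv)
  rw [← Int.natAbs_dvd, ← hprim.zpow_eq_one_iff_dvd]
  exact h _ ((hprim.zpow_eq_one_iff_dvd v).2 Int.natAbs_dvd_self)

lemma Real.intCast_eq_mul_of_zpow_eq_rpow_zpow {q : ℝ} (hq0 : 0 < q) (hq1 : q ≠ 1)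
    {k m : ℤ} {t : ℝ} (h : q ^ k = (q ^ t) ^ m) : (k : ℝ) = t * m := by
  rwa [← Real.rpow_intCast, ← Real.rpow_intCast, ← Real.rpow_mul hq0.le,
    Real.rpow_right_inj hq0 hq1] at h

theorem contiguous_divisibility_general (q : ℝ) (hq0 : 0 < q) (hq1 : q < 1)
    (v : ℤ) (hv : v ≠ 0) (t : ℚ) (ht : 0 < t)
    (α w : ℤ) (ρ : ℕ) (s : ℚ)
    (hrel : ∀ a : ℂ, a ≠ 0 →
      thetaOne q t v (a * (q : ℂ) ^ α)
        = (-1 : ℂ) ^ ρ * a ^ (-w) * ((q ^ (-(s : ℝ)) : ℝ) : ℂ) * thetaOne q t v a) :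
    v ∣ w ∧ ∃ n : ℤ, (α : ℚ) * (v : ℚ) = (n : ℚ) * t := by
  set C : ℂ := (-1 : ℂ) ^ ρ * ((q ^ (-(s : ℝ)) : ℝ) : ℂ)
  have hC : C ≠ 0 := mul_ne_zero (pow_ne_zero _ (by norm_num))
    (by exact_mod_cast (Real.rpow_pos_of_pos hq0 _).ne')
  have hrel' (a : ℂ) (ha : a ≠ 0) :
      thetaOne q t v (a * (q : ℂ) ^ α) = C * a ^ (-w) * thetaOne q t v a := by
    rw [hrel a ha]; ring
  have hqα : (q : ℂ) ^ α ≠ 0 := zpow_ne_zero _ (by exact_mod_cast hq0.ne')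
  constructor
  · obtain ⟨a, ha, hfa⟩ := exists_thetaOne_ne_zero hq0 hq1 ht hv
    refine Int.dvd_of_forall_zpow_eq_one_imp hv fun ζ hζ => ?_
    have hζ0 : ζ ≠ 0 := by rintro rfl; simp [zero_zpow v hv] at hζ
    exact zpow_eq_one_of_quasiperiodic (thetaOne_mul_of_zpow_eq_one q t v hζ) hrel' hC hζ0 ha hfa
  · have hzero : thetaOne q t v ((q : ℂ) ^ α)⁻¹ = 0 := by
      have h := hrel' _ (inv_ne_zero hqα)
      rw [inv_mul_cancel₀ hqα, thetaOne_one] at h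
      simpa [hC, hqα, zpow_ne_zero] using h.symm
    obtain ⟨m, hm⟩ := (thetaOne_eq_zero_iff hq0 hq1 ht v (inv_ne_zero hqα)).1 hzero
    rw [← zpow_neg, ← zpow_mul, ← ofReal_zpow, ← ofReal_zpow, ofReal_inj] at hm
    have hexp := Real.intCast_eq_mul_of_zpow_eq_rpow_zpow hq0 hq1.ne hm
    refine ⟨-m, Rat.cast_injective (α := ℝ) ?_⟩
    push_cast at hexp ⊢
    linear_combination -hexp

/-- If `f(a) = (a^v, q^t/a^v; q^t)_∞` satisfies a contiguous relation
`f(a q^α) = (-1)^ρ a^{-w} q^{-s} f(a)`, then `v ∣ w` and `α v` is an integer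
multiple of `t`. -/
theorem contiguous_divisibility (q : ℝ) (hq0 : 0 < q) (hq1 : q < 1)
    (v : ℤ) (hv : v ≠ 0) (t : ℚ) (ht : 0 < t)
    (α w : ℤ) (ρ : ℕ) (hρ : ρ = 0 ∨ ρ = 1) (s : ℚ)
    (hrel : ∀ a : ℂ, a ≠ 0 →
      thetaOne q t v (a * (q : ℂ) ^ α)
        = (-1 : ℂ) ^ ρ * a ^ (-w) * ((q ^ (-(s : ℝ)) : ℝ) : ℂ) * thetaOne q t v a) :
    v ∣ w ∧ ∃ n : ℤ, (α : ℚ) * (v : ℚ) = (n : ℚ) * t :=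
  contiguous_divisibility_general q hq0 hq1 v hv t ht α w ρ s hrel
end

section
/- Let q be real with 0 < q < 1, let r, m be integers with 1 < m ≤ r, and let θ : (ℂ∖{0})^r → ℂ be a multiple theta function θ(a) = ∏_{i=1}^m [(−1)^{δ_i} a^{γ_i} q^{z_i}; q^{t_i}]_∞ with δ_i ∈ {0,1}, exponent vectors γ_1, …, γ_m ∈ ℤ^r linearly independent over ℚ, z_i ∈ ℚ and t_i ∈ ℚ_{>0}. Let k_1, …, k_m be rational numbers, not all zero, and set v = k_1 γ_1 + k_2 γ_2 + ⋯ + k_m γ_m. Then there exist a vector x = (x_1, …, x_r) ∈ ℚ^r and a nonzero rational number ε such that ε k_i is an integer for every i, the vector ε v lies in ℤ^r, and for all a = (a_1, …, a_r) ∈ (ℂ∖{0})^r the contiguous relation θ(a_1 q^{x_1}, …, a_r q^{x_r}) = (−1)^{Σ_{i=1}^m (δ_i + 1) ε k_i} · q^{−Σ_{i=1}^m ( ε z_i k_i + C(ε k_i, 2) t_i )} · a^{−ε v} · θ(a) holds, where C(n,2) = n(n−1)/2. -/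
/-- The theta function `[x; Q]_∞ = (x;Q)_∞ (Q/x;Q)_∞`. -/
noncomputable def theta (x Q : ℂ) : ℂ := qPoch x Q * qPoch (Q / x) Q

/-- The multiple theta function
`θ(a) = ∏_{i=1}^m [(-1)^{δ_i} a^{γ_i} q^{z_i}; q^{t_i}]_∞`. -/
noncomputable def mtheta (q : ℝ) {r m : ℕ} (δ : Fin m → ℕ) (γ : Fin m → Fin r → ℤ)
    (z t : Fin m → ℚ) (a : Fin r → ℂ) : ℂ :=
  ∏ i, theta ((-1 : ℂ) ^ (δ i) * (∏ j, a j ^ (γ i j)) * ((q ^ ((z i : ℝ)) : ℝ) : ℂ))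
    ((q ^ ((t i : ℝ)) : ℝ) : ℂ)

/-!
From `(x; Q)_∞ = (1 - x) (xQ; Q)_∞` one gets `[Q x; Q]_∞ = -x⁻¹ [x; Q]_∞`, and iterating in both
directions, `[Qⁿ x; Q]_∞ = (-1)ⁿ x⁻ⁿ Q^(-n(n-1)/2) [x; Q]_∞` for every `n ∈ ℤ`. Take `ε` clearing
the denominators of the `kᵢ`, so that `nᵢ = ε kᵢ ∈ ℤ`. Because the `γᵢ` are linearly independent,
the system `⟨γᵢ, x⟩ = nᵢ tᵢ` has a rational solution `x`, and the shift `a ↦ a q^x` multiplies the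
argument of the `i`-th factor by exactly `(q^tᵢ)^nᵢ`. Multiplying the resulting relations over `i`
gives the contiguous relation, with `-ε v = -∑ nᵢ γᵢ` collecting the powers of `a`.
-/

lemma multipliable_one_sub_mul_pow (x : ℂ) {Q : ℂ} (hQ : ‖Q‖ < 1) :
    Multipliable fun k : ℕ => 1 - x * Q ^ k := by
  simpa [sub_eq_add_neg] using Complex.multipliable_one_add_of_summable
    ((summable_geometric_of_norm_lt_one hQ).mul_left x).neg

lemma qPoch_eq_one_sub_mul_qPoch (x : ℂ) {Q : ℂ} (hQ : ‖Q‖ < 1) :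
    qPoch x Q = (1 - x) * qPoch (x * Q) Q := by
  have h : Multipliable fun k : ℕ => 1 - x * Q ^ (k + 1) := by
    simpa only [pow_succ', mul_assoc, mul_left_comm Q] using multipliable_one_sub_mul_pow (x * Q) hQ
  unfold qPoch
  rw [tprod_eq_zero_mul' (f := fun k => 1 - x * Q ^ k) h, pow_zero, mul_one]
  congr 1
  exact tprod_congr fun k => by ring

lemma theta_mul_left {x Q : ℂ} (hx : x ≠ 0) (hQ0 : Q ≠ 0) (hQ : ‖Q‖ < 1) :
    theta (Q * x) Q = -x⁻¹ * theta x Q := by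
  have h : Q / (Q * x) = x⁻¹ := by field_simp
  rw [theta, theta, h, qPoch_eq_one_sub_mul_qPoch x hQ, qPoch_eq_one_sub_mul_qPoch x⁻¹ hQ,
    mul_comm Q x, inv_mul_eq_div]
  field_simp
  ring

-- `n * (n - 1) / 2` is integer division, exact because `n * (n - 1)` is even.
lemma theta_zpow_mul {Q x : ℂ} (hQ0 : Q ≠ 0) (hQ : ‖Q‖ < 1) (hx : x ≠ 0) (n : ℤ) :
    theta (Q ^ n * x) Q = (-1) ^ n * x ^ (-n) * Q ^ (-(n * (n - 1) / 2)) * theta x Q := by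
  set F : ℤ → ℂ := fun n => (-1) ^ n * x ^ n * Q ^ (n * (n - 1) / 2) * theta (Q ^ n * x) Q
  have hstep : ∀ n, F (n + 1) = F n := by
    intro n
    have hc : (n + 1) * (n + 1 - 1) / 2 = n * (n - 1) / 2 + n := by
      rw [show (n + 1) * (n + 1 - 1) = n * (n - 1) + n * 2 by ring,
        Int.add_mul_ediv_right _ _ two_ne_zero]
    have hQn : Q ^ n ≠ 0 := zpow_ne_zero _ hQ0
    simp only [F]
    rw [zpow_add_one₀ hQ0, mul_comm _ Q, mul_assoc Q,
      theta_mul_left (mul_ne_zero hQn hx) hQ0 hQ, hc, zpow_add₀ hQ0, zpow_add_one₀ hx,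
      zpow_add_one₀ (neg_ne_zero.2 one_ne_zero)]
    field_simp
  have hconst : ∀ n, F n = theta x Q := by
    intro n
    induction n using Int.induction_on with
    | zero => simp [F]
    | succ i ih => rw [hstep, ih]
    | pred i ih => rw [← hstep, sub_add_cancel, ih]
  rw [← hconst n]
  simp only [F]
  rw [zpow_neg, zpow_neg]
  have hsign : ((-1 : ℂ) ^ n) ^ 2 = 1 := by
    rw [← zpow_natCast, ← zpow_mul, mul_comm, zpow_mul]
    norm_num
  field_simp
  rw [hsign, mul_one]

theorem Matrix.mulVec_surjective_of_linearIndependent_row {K ι κ : Type*} [Field K]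
    [Fintype ι] [Fintype κ] {M : Matrix ι κ K} (h : LinearIndependent K M.row) :
    Function.Surjective M.mulVec := by
  change Function.Surjective M.mulVecLin
  rw [← LinearMap.range_eq_top]
  apply Submodule.eq_top_of_finrank_eq
  rw [Module.finrank_fintype_fun_eq_card, ← h.rank_matrix]
  rfl

theorem Rat.exists_ne_zero_forall_mul_eq_intCast {ι : Type*} [Finite ι] (k : ι → ℚ) :
    ∃ ε : ℚ, ε ≠ 0 ∧ ∃ n : ι → ℤ, ∀ i, ε * k i = n i := by
  obtain ⟨b, hb⟩ := IsLocalization.exist_integer_multiples_of_finite (nonZeroDivisors ℤ) k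
  choose n hn using hb
  refine ⟨b, by exact_mod_cast nonZeroDivisors.coe_ne_zero b, n, fun i => ?_⟩
  simpa using (hn i).symm

lemma ofReal_rpow_zpow {q : ℝ} (hq : 0 < q) (s : ℝ) (e : ℤ) :
    ((q ^ s : ℝ) : ℂ) ^ e = ((q ^ (s * e) : ℝ) : ℂ) := by
  rw [← Complex.ofReal_zpow, ← Real.rpow_intCast, ← Real.rpow_mul hq.le]

lemma prod_ofReal_rpow {ι : Type*} {q : ℝ} (hq : 0 < q) (s : Finset ι) (f : ι → ℝ) :
    ∏ i ∈ s, ((q ^ f i : ℝ) : ℂ) = ((q ^ ∑ i ∈ s, f i : ℝ) : ℂ) := by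
  rw [Real.rpow_sum_of_pos hq]
  push_cast
  rfl

lemma zpow_sum₀ {ι G₀ : Type*} [CommGroupWithZero G₀] {a : G₀} (ha : a ≠ 0) (s : Finset ι)
    (f : ι → ℤ) :
    a ^ (∑ i ∈ s, f i) = ∏ i ∈ s, a ^ f i := by
  classical
  induction s using Finset.induction with
  | empty => simp
  | insert _ _ h ih => rw [Finset.sum_insert h, Finset.prod_insert h, zpow_add₀ ha, ih]

lemma prod_prod_zpow_zpow_neg {ι κ G₀ : Type*} [Fintype ι] [Fintype κ] [CommGroupWithZero G₀]
    {a : κ → G₀} (ha : ∀ j, a j ≠ 0) (g : ι → κ → ℤ) (n : ι → ℤ) :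
    ∏ i, (∏ j, a j ^ g i j) ^ (-n i) = ∏ j, a j ^ (-∑ i, n i * g i j) := by
  simp only [← Finset.sum_neg_distrib, zpow_sum₀ (ha _), ← Finset.prod_zpow, ← zpow_mul]
  rw [Finset.prod_comm]
  simp only [mul_neg, mul_comm]

lemma prod_mul_ofReal_rpow_zpow {κ : Type*} [Fintype κ] {q : ℝ} (hq : 0 < q) (a : κ → ℂ)
    (g : κ → ℤ) {x : κ → ℝ} {s : ℝ} (hx : ∑ j, g j * x j = s) :
    ∏ j, (a j * ((q ^ x j : ℝ) : ℂ)) ^ g j = (∏ j, a j ^ g j) * ((q ^ s : ℝ) : ℂ) := by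
  simp only [mul_zpow, Finset.prod_mul_distrib, ofReal_rpow_zpow hq, prod_ofReal_rpow hq, ← hx,
    mul_comm (x _)]

lemma neg_one_zpow_mul_pow_zpow_neg (d : ℕ) (n : ℤ) :
    (-1 : ℂ) ^ n * ((-1) ^ d) ^ (-n) = (-1) ^ (((d : ℤ) + 1) * n) := by
  rw [zpow_neg, ← inv_zpow, ← inv_pow, inv_neg_one, ← zpow_natCast, ← zpow_mul,
    ← zpow_add₀ (neg_ne_zero.2 one_ne_zero)]
  ring_nf

lemma theta_monomial_shift {κ : Type*} [Fintype κ] {q : ℝ} (hq0 : 0 < q) (hq1 : q < 1) (d : ℕ)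
    (g : κ → ℤ) (z : ℝ) {t : ℝ} (ht : 0 < t) {n : ℤ} {x : κ → ℝ} (hx : ∑ j, g j * x j = n * t)
    {a : κ → ℂ} (ha : ∀ j, a j ≠ 0) :
    theta ((-1) ^ d * (∏ j, (a j * ((q ^ x j : ℝ) : ℂ)) ^ g j) * ((q ^ z : ℝ) : ℂ))
        ((q ^ t : ℝ) : ℂ) =
      (-1) ^ (((d : ℤ) + 1) * n) * ((q ^ (-(z * n + n * (n - 1) / 2 * t)) : ℝ) : ℂ) *
        (∏ j, a j ^ g j) ^ (-n) *
        theta ((-1) ^ d * (∏ j, a j ^ g j) * ((q ^ z : ℝ) : ℂ)) ((q ^ t : ℝ) : ℂ) := by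
  set Q : ℂ := ((q ^ t : ℝ) : ℂ)
  set P : ℂ := ∏ j, a j ^ g j
  have hQ0 : Q ≠ 0 := Complex.ofReal_ne_zero.2 (Real.rpow_pos_of_pos hq0 t).ne'
  have hQ1 : ‖Q‖ < 1 := by
    rw [Complex.norm_real, Real.norm_of_nonneg (Real.rpow_nonneg hq0.le t)]
    exact Real.rpow_lt_one hq0.le hq1 ht
  have hA : (-1) ^ d * P * ((q ^ z : ℝ) : ℂ) ≠ 0 := by
    have hP : P ≠ 0 := Finset.prod_ne_zero_iff.2 fun j _ => zpow_ne_zero _ (ha j)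
    have hqz : ((q ^ z : ℝ) : ℂ) ≠ 0 := Complex.ofReal_ne_zero.2 (Real.rpow_pos_of_pos hq0 z).ne'
    simp [hP, hqz]
  have harg : (-1) ^ d * (∏ j, (a j * ((q ^ x j : ℝ) : ℂ)) ^ g j) * ((q ^ z : ℝ) : ℂ) =
      Q ^ n * ((-1) ^ d * P * ((q ^ z : ℝ) : ℂ)) := by
    rw [prod_mul_ofReal_rpow_zpow hq0 a g hx, ofReal_rpow_zpow hq0, mul_comm t]
    ring
  have hc : ((n * (n - 1) / 2 : ℤ) : ℝ) = n * (n - 1) / 2 := by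
    rw [Int.cast_div (Int.even_mul_pred_self n).two_dvd two_ne_zero]
    push_cast
    ring
  rw [harg, theta_zpow_mul hQ0 hQ1 hA, mul_zpow, mul_zpow, ← mul_assoc, ← mul_assoc,
    neg_one_zpow_mul_pow_zpow_neg, ofReal_rpow_zpow hq0, ofReal_rpow_zpow hq0]
  rw [mul_assoc ((-1) ^ _ * _), ← Complex.ofReal_mul, ← Real.rpow_add hq0, Int.cast_neg,
    Int.cast_neg, hc]
  ring_nf

theorem exists_contiguous_relation_general (q : ℝ) (hq0 : 0 < q) (hq1 : q < 1)
    (r m : ℕ)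
    (δ : Fin m → ℕ)
    (γ : Fin m → Fin r → ℤ)
    (hγ : LinearIndependent ℚ (fun i => fun j => (γ i j : ℚ)))
    (z : Fin m → ℚ) (t : Fin m → ℚ) (ht : ∀ i, 0 < t i)
    (k : Fin m → ℚ) :
    ∃ (x : Fin r → ℚ) (ε : ℚ), ε ≠ 0 ∧
      ∃ (n : Fin m → ℤ) (V : Fin r → ℤ),
        (∀ i, ε * k i = (n i : ℚ)) ∧
        (∀ j, ε * (∑ i, k i * (γ i j : ℚ)) = (V j : ℚ)) ∧
        ∀ a : Fin r → ℂ, (∀ j, a j ≠ 0) →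
          mtheta q δ γ z t (fun j => a j * ((q ^ ((x j : ℝ)) : ℝ) : ℂ))
            = (-1 : ℂ) ^ (∑ i, ((δ i : ℤ) + 1) * n i)
              * ((q ^ ((-(∑ i, (ε * z i * k i
                    + ((n i : ℚ) * ((n i : ℚ) - 1) / 2) * t i)) : ℚ) : ℝ) : ℝ) : ℂ)
              * (∏ j, a j ^ (-(V j)))
              * mtheta q δ γ z t a := by
  obtain ⟨ε, hε, n, hn⟩ := Rat.exists_ne_zero_forall_mul_eq_intCast k
  obtain ⟨x, hx⟩ := Matrix.mulVec_surjective_of_linearIndependent_row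
    (M := Matrix.of fun i j => (γ i j : ℚ)) hγ fun i => n i * t i
  have hxR : ∀ i, ∑ j, (γ i j : ℝ) * (x j : ℝ) = n i * (t i : ℝ) := fun i => by
    exact_mod_cast congrFun hx i
  refine ⟨x, ε, hε, n, fun j => ∑ i, n i * γ i j, hn, fun j => ?_, fun a ha => ?_⟩
  · push_cast
    rw [Finset.mul_sum]
    exact Finset.sum_congr rfl fun i _ => by rw [← mul_assoc, hn]
  · simp only [mtheta]
    rw [Finset.prod_congr rfl fun i _ =>
        theta_monomial_shift hq0 hq1 (δ i) (γ i) (z i) (by exact_mod_cast ht i) (hxR i) ha,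
      Finset.prod_mul_distrib, Finset.prod_mul_distrib, Finset.prod_mul_distrib]
    have hsign : ∏ i, (-1 : ℂ) ^ (((δ i : ℤ) + 1) * n i) = (-1) ^ ∑ i, ((δ i : ℤ) + 1) * n i :=
      (zpow_sum₀ (neg_ne_zero.2 one_ne_zero) _ _).symm
    have hεz : ∀ i, (ε : ℝ) * z i * k i = z i * n i := fun i => by
      rw [mul_right_comm, ← Rat.cast_mul, hn, Rat.cast_intCast, mul_comm]
    rw [hsign, prod_prod_zpow_zpow_neg ha, prod_ofReal_rpow hq0]
    push_cast
    simp only [hεz, Finset.sum_neg_distrib]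

/-- Every nonzero rational combination `v = k_1 γ_1 + ⋯ + k_m γ_m` of the exponent
vectors gives rise to a contiguous relation for the multiple theta function. -/
theorem exists_contiguous_relation (q : ℝ) (hq0 : 0 < q) (hq1 : q < 1)
    (r m : ℕ) (hm : 1 < m) (hmr : m ≤ r)
    (δ : Fin m → ℕ) (hδ : ∀ i, δ i = 0 ∨ δ i = 1)
    (γ : Fin m → Fin r → ℤ)
    (hγ : LinearIndependent ℚ (fun i => fun j => (γ i j : ℚ)))
    (z : Fin m → ℚ) (t : Fin m → ℚ) (ht : ∀ i, 0 < t i)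
    (k : Fin m → ℚ) (hk : ∃ i, k i ≠ 0) :
    ∃ (x : Fin r → ℚ) (ε : ℚ), ε ≠ 0 ∧
      ∃ (n : Fin m → ℤ) (V : Fin r → ℤ),
        (∀ i, ε * k i = (n i : ℚ)) ∧
        (∀ j, ε * (∑ i, k i * (γ i j : ℚ)) = (V j : ℚ)) ∧
        ∀ a : Fin r → ℂ, (∀ j, a j ≠ 0) →
          mtheta q δ γ z t (fun j => a j * ((q ^ ((x j : ℝ)) : ℝ) : ℂ))
            = (-1 : ℂ) ^ (∑ i, ((δ i : ℤ) + 1) * n i)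
              * ((q ^ ((-(∑ i, (ε * z i * k i
                    + ((n i : ℚ) * ((n i : ℚ) - 1) / 2) * t i)) : ℚ) : ℝ) : ℝ) : ℂ)
              * (∏ j, a j ^ (-(V j)))
              * mtheta q δ γ z t a :=
  exists_contiguous_relation_general q hq0 hq1 r m δ γ hγ z t ht k
end

section
/- Let q be real with 0 < q < 1, let r, m be integers with 1 < m ≤ r, and let θ : (ℂ∖{0})^r → ℂ be a multiple theta function θ(a) = ∏_{i=1}^m [(−1)^{δ_i} a^{γ_i} q^{z_i}; q^{t_i}]_∞ with δ_i ∈ {0,1}, exponent vectors γ_1, …, γ_m ∈ ℤ^r linearly independent over ℚ, z_i ∈ ℚ and t_i ∈ ℚ_{>0}. Suppose θ satisfies a contiguous relation: there exist α ∈ ℤ^r, w ∈ ℤ^r, ρ ∈ {0,1} and s ∈ ℚ such that θ(a_1 q^{α_1}, …, a_r q^{α_r}) = (−1)^ρ · a^{−w} · q^{−s} · θ(a) for all a ∈ (ℂ∖{0})^r. Then there exist integers υ_1, …, υ_m such that w = υ_1 γ_1 + υ_2 γ_2 + ⋯ + υ_m γ_m. -/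
/-!
The monomial map `a ↦ (a^{γ_i})_i` from `(ℂ^×)^r` to `(ℂ^×)^m` is surjective because the `γ_i`
are independent. Hence `θ` has a zero-free point `a` (put every theta argument at `i`, off the
real axis where the zeros lie), and `θ` is invariant under `a ↦ a b` for `b` in the kernel of the
monomial map. Comparing the contiguous relation at `a` and at `a b` gives `b^w = 1` on that kernel.
For `b = exp d` this says `⟨w, d⟩ ∈ 2πiℤ` whenever all `⟨γ_i, d⟩ ∈ 2πiℤ`: scaling `d` in the
kernel of `γ` puts `w` in the complex span of the `γ_i`, and `d` running over a dual basis
(times `2πi`) makes the coefficients integers.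
-/

open Complex Real

section

open Matrix

theorem Matrix.exists_mul_eq_one_of_linearIndependent_row {m n K : Type*} [Field K] [Fintype m]
    [DecidableEq m] [Fintype n] {A : Matrix m n K} (h : LinearIndependent K A.row) :
    ∃ B : Matrix n m K, A * B = 1 := by
  rw [← mulVec_surjective_iff_exists_right_inverse, ← coe_mulVecLin, ← LinearMap.range_eq_top]
  refine Submodule.eq_top_of_finrank_eq ?_
  rw [← rank, h.rank_matrix, Module.finrank_fintype_fun_eq_card]

theorem Matrix.exists_map_intCast_mul_eq_one {m n K : Type*} [Field K] [CharZero K] [Fintype m]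
    [DecidableEq m] [Fintype n] {A : Matrix m n ℤ}
    (h : LinearIndependent ℚ (A.map (Int.cast : ℤ → ℚ)).row) :
    ∃ B : Matrix n m K, A.map (Int.cast : ℤ → K) * B = 1 := by
  obtain ⟨B, hB⟩ := exists_mul_eq_one_of_linearIndependent_row h
  refine ⟨B.map (Rat.castHom K), ?_⟩
  have hA : A.map (Int.cast : ℤ → K) = (A.map (Int.cast : ℤ → ℚ)).map (Rat.castHom K) := by
    ext; simp
  rw [hA, ← Matrix.map_mul, hB, Matrix.map_one _ (map_zero _) (map_one _)]

theorem Complex.prod_exp_zpow {ι : Type*} [Fintype ι] (c : ι → ℂ) (g : ι → ℤ) :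
    ∏ j, cexp (c j) ^ g j = cexp (∑ j, g j * c j) := by
  rw [exp_sum]
  exact Finset.prod_congr rfl fun j _ => (exp_int_mul _ _).symm

theorem Complex.eq_zero_of_forall_exp_mul_eq_one {x : ℂ} (h : ∀ c : ℂ, cexp (c * x) = 1) :
    x = 0 := by
  by_contra hx
  have := h (π * I / x)
  rw [div_mul_cancel₀ _ hx, exp_pi_mul_I] at this
  norm_num at this

theorem exists_prod_zpow_eq {m n : Type*} [Fintype m] [DecidableEq m] [Fintype n]
    (Γ : Matrix m n ℤ) {B : Matrix n m ℂ} (hB : Γ.map (Int.cast : ℤ → ℂ) * B = 1) {y : m → ℂ}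
    (hy : ∀ i, y i ≠ 0) : ∃ a : n → ℂ, (∀ j, a j ≠ 0) ∧ ∀ i, ∏ j, a j ^ Γ i j = y i := by
  refine ⟨fun j => cexp ((B *ᵥ fun i => log (y i)) j), fun j => exp_ne_zero _, fun i => ?_⟩
  have hlog : Γ.map (Int.cast : ℤ → ℂ) *ᵥ B *ᵥ (fun i => log (y i)) = fun i => log (y i) := by
    rw [mulVec_mulVec, hB, one_mulVec]
  rw [prod_exp_zpow, ← exp_log (hy i), ← congrFun hlog i]
  rfl

theorem exists_eq_vecMul_of_prod_zpow_eq_one {m n : Type*} [Fintype m] [DecidableEq m]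
    [Fintype n] [DecidableEq n] (Γ : Matrix m n ℤ) {B : Matrix n m ℂ}
    (hB : Γ.map (Int.cast : ℤ → ℂ) * B = 1) {w : n → ℤ}
    (hw : ∀ b : n → ℂ, (∀ j, b j ≠ 0) → (∀ i, ∏ j, b j ^ Γ i j = 1) → ∏ j, b j ^ w j = 1) :
    ∃ υ : m → ℤ, w = υ ᵥ* Γ := by
  set Γc := Γ.map (Int.cast : ℤ → ℂ)
  set wc : n → ℂ := fun j => w j
  have hexp : ∀ d : n → ℂ, (∀ i, cexp ((Γc *ᵥ d) i) = 1) → cexp (wc ⬝ᵥ d) = 1 := by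
    intro d hd
    have h := hw (fun j => cexp (d j)) (fun j => exp_ne_zero _) fun i => by
      rw [prod_exp_zpow]; exact hd i
    rwa [prod_exp_zpow] at h
  have hker : ∀ d, Γc *ᵥ d = 0 → wc ⬝ᵥ d = 0 := fun d hd =>
    eq_zero_of_forall_exp_mul_eq_one fun c => by
      rw [← smul_eq_mul, ← dotProduct_smul]
      exact hexp _ fun i => by simp [mulVec_smul, hd]
  have hint : ∀ i, ∃ k : ℤ, (wc ᵥ* B) i = k := by
    intro i
    have := hexp (B *ᵥ Pi.single i (2 * π * I)) fun i' => by
      rw [mulVec_mulVec, hB, one_mulVec]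
      by_cases h : i' = i
      · subst h; simp
      · simp [h]
    rw [dotProduct_mulVec, dotProduct_single, Complex.exp_eq_one_iff] at this
    obtain ⟨k, hk⟩ := this
    exact ⟨k, mul_right_cancel₀ two_pi_I_ne_zero hk⟩
  choose υ hυ using hint
  refine ⟨υ, funext fun j => Int.cast_injective (α := ℂ) ?_⟩
  have := hker (Pi.single j 1 - B *ᵥ Γc *ᵥ Pi.single j 1) (by
    rw [mulVec_sub, mulVec_mulVec, hB, one_mulVec, sub_self])
  rw [dotProduct_sub, dotProduct_mulVec, dotProduct_mulVec, sub_eq_zero, dotProduct_single,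
    dotProduct_single, mul_one, mul_one, funext hυ] at this
  change wc j = _
  rw [this, ← eq_intCast (Int.castRingHom ℂ), RingHom.map_vecMul]
  rfl

end

theorem qPoch_ne_zero {x Q : ℂ} (hQ : ‖Q‖ < 1) (hx : ∀ k : ℕ, x * Q ^ k ≠ 1) :
    qPoch x Q ≠ 0 := by
  have hsum : Summable fun k : ℕ => ‖-(x * Q ^ k)‖ := by
    simpa [norm_mul, norm_pow] using
      (summable_geometric_of_lt_one (norm_nonneg Q) hQ).mul_left ‖x‖
  simpa [qPoch, sub_eq_add_neg] using tprod_one_add_ne_zero_of_summable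
    (fun k => by rw [← sub_eq_add_neg, sub_ne_zero]; exact (hx k).symm) hsum

theorem theta_ne_zero_of_im_ne_zero {x : ℂ} {Q : ℝ} (hx : x.im ≠ 0) (hQ0 : 0 < Q) (hQ1 : Q < 1) :
    theta x Q ≠ 0 := by
  have hQ : ‖(Q : ℂ)‖ < 1 := by rwa [norm_real, Real.norm_of_nonneg hQ0.le]
  have hx0 : x ≠ 0 := fun h => hx (by simp [h])
  refine mul_ne_zero (qPoch_ne_zero hQ fun k h => ?_) (qPoch_ne_zero hQ fun k h => ?_)
  · have him := congrArg im h
    simp [← ofReal_pow, hx, hQ0.ne'] at him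
  · have him := congrArg im h
    simp [← ofReal_pow, div_im, hx, hQ0.ne', hx0] at him

theorem mtheta_mul_of_prod_zpow_eq_one {q : ℝ} {r m : ℕ} {δ : Fin m → ℕ} {γ : Fin m → Fin r → ℤ}
    {z t : Fin m → ℚ} (a : Fin r → ℂ) {b : Fin r → ℂ} (hb : ∀ i, ∏ j, b j ^ γ i j = 1) :
    mtheta q δ γ z t (a * b) = mtheta q δ γ z t a := by
  simp only [mtheta, Pi.mul_apply, mul_zpow, Finset.prod_mul_distrib, hb, mul_one]

theorem exists_mtheta_ne_zero {q : ℝ} (hq0 : 0 < q) (hq1 : q < 1) {r m : ℕ} (δ : Fin m → ℕ)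
    {γ : Fin m → Fin r → ℤ} (z : Fin m → ℚ) {t : Fin m → ℚ} (ht : ∀ i, 0 < t i)
    {B : Matrix (Fin r) (Fin m) ℂ} (hB : (Matrix.of γ).map (Int.cast : ℤ → ℂ) * B = 1) :
    ∃ a : Fin r → ℂ, (∀ j, a j ≠ 0) ∧ mtheta q δ γ z t a ≠ 0 := by
  have hz : ∀ i, ((q ^ (z i : ℝ) : ℝ) : ℂ) ≠ 0 := fun i =>
    ofReal_ne_zero.2 (Real.rpow_pos_of_pos hq0 _).ne'
  obtain ⟨a, ha, hmono⟩ := exists_prod_zpow_eq (Matrix.of γ) hB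
    (y := fun i => I / ((-1) ^ δ i * ((q ^ (z i : ℝ) : ℝ) : ℂ))) fun i => by simp [hz i]
  refine ⟨a, ha, Finset.prod_ne_zero_iff.2 fun i _ => ?_⟩
  have harg : (-1) ^ δ i * (∏ j, a j ^ γ i j) * ((q ^ (z i : ℝ) : ℝ) : ℂ) = I := by
    rw [show ∏ j, a j ^ γ i j = _ from hmono i]
    field_simp [hz i]
  rw [harg]
  exact theta_ne_zero_of_im_ne_zero (by simp) (Real.rpow_pos_of_pos hq0 _)
    (Real.rpow_lt_one hq0.le hq1 (by exact_mod_cast ht i))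

def SatisfiesContiguousRelation {r : ℕ} (θ : (Fin r → ℂ) → ℂ) (q : ℝ) (α w : Fin r → ℤ) (ρ : ℕ)
    (s : ℚ) : Prop :=
  ∀ a : Fin r → ℂ, (∀ j, a j ≠ 0) →
    θ (fun j => a j * ((q : ℂ) ^ (α j)))
      = (-1 : ℂ) ^ ρ * (∏ j, a j ^ (-(w j))) * ((q ^ (-(s : ℝ)) : ℝ) : ℂ) * θ a

theorem SatisfiesContiguousRelation.prod_zpow_eq_one {r : ℕ} {θ : (Fin r → ℂ) → ℂ} {q : ℝ}
    {α w : Fin r → ℤ} {ρ : ℕ} {s : ℚ} (h : SatisfiesContiguousRelation θ q α w ρ s) (hq : 0 < q)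
    {a b : Fin r → ℂ} (ha : ∀ j, a j ≠ 0) (hb : ∀ j, b j ≠ 0) (hθa : θ a ≠ 0)
    (hθb : ∀ x, θ (x * b) = θ x) : ∏ j, b j ^ w j = 1 := by
  have hab := h (a * b) fun j => mul_ne_zero (ha j) (hb j)
  have hshift : (fun j => (a * b) j * (q : ℂ) ^ α j) = (fun j => a j * (q : ℂ) ^ α j) * b := by
    ext j; simp only [Pi.mul_apply]; ring
  rw [hshift, hθb, hθb, h a ha] at hab
  simp only [Pi.mul_apply, mul_zpow, Finset.prod_mul_distrib] at hab
  have hne : (-1 : ℂ) ^ ρ * (∏ j, a j ^ (-(w j))) * ((q ^ (-(s : ℝ)) : ℝ) : ℂ) * θ a ≠ 0 := by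
    refine mul_ne_zero (mul_ne_zero (mul_ne_zero (pow_ne_zero _ (by norm_num)) ?_) ?_) hθa
    · exact Finset.prod_ne_zero_iff.2 fun j _ => zpow_ne_zero _ (ha j)
    · exact ofReal_ne_zero.2 (Real.rpow_pos_of_pos hq _).ne'
  have hinv : ∏ j, b j ^ (-(w j)) = 1 := mul_left_cancel₀ hne (by linear_combination -hab)
  simpa [zpow_neg, Finset.prod_inv_distrib] using hinv

theorem contiguous_exponent_mem_lattice_general (q : ℝ) (hq0 : 0 < q) (hq1 : q < 1)
    (r m : ℕ)
    (δ : Fin m → ℕ)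
    (γ : Fin m → Fin r → ℤ)
    (hγ : LinearIndependent ℚ (fun i => fun j => (γ i j : ℚ)))
    (z : Fin m → ℚ) (t : Fin m → ℚ) (ht : ∀ i, 0 < t i)
    (α w : Fin r → ℤ) (ρ : ℕ) (s : ℚ)
    (hrel : ∀ a : Fin r → ℂ, (∀ j, a j ≠ 0) →
      mtheta q δ γ z t (fun j => a j * ((q : ℂ) ^ (α j)))
        = (-1 : ℂ) ^ ρ * (∏ j, a j ^ (-(w j))) * ((q ^ (-(s : ℝ)) : ℝ) : ℂ)
            * mtheta q δ γ z t a) :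
    ∃ υ : Fin m → ℤ, ∀ j, w j = ∑ i, υ i * γ i j := by
  obtain ⟨B, hB⟩ := Matrix.exists_map_intCast_mul_eq_one (K := ℂ) (A := Matrix.of γ) hγ
  obtain ⟨a, ha, hθa⟩ := exists_mtheta_ne_zero hq0 hq1 δ z ht hB
  have hrel' : SatisfiesContiguousRelation (mtheta q δ γ z t) q α w ρ s := hrel
  obtain ⟨υ, hυ⟩ := exists_eq_vecMul_of_prod_zpow_eq_one (Matrix.of γ) hB fun b hb hbγ =>
    hrel'.prod_zpow_eq_one hq0 ha hb hθa fun x => mtheta_mul_of_prod_zpow_eq_one x hbγ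
  exact ⟨υ, congrFun hυ⟩

/-- If a multiple theta function satisfies a contiguous relation with exponent
vector `w`, then `w` is an integer combination of the exponent vectors
`γ_1, …, γ_m` of its factors. -/
theorem contiguous_exponent_mem_lattice (q : ℝ) (hq0 : 0 < q) (hq1 : q < 1)
    (r m : ℕ) (hm : 1 < m) (hmr : m ≤ r)
    (δ : Fin m → ℕ) (hδ : ∀ i, δ i = 0 ∨ δ i = 1)
    (γ : Fin m → Fin r → ℤ)
    (hγ : LinearIndependent ℚ (fun i => fun j => (γ i j : ℚ)))
    (z : Fin m → ℚ) (t : Fin m → ℚ) (ht : ∀ i, 0 < t i)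
    (α w : Fin r → ℤ) (ρ : ℕ) (hρ : ρ = 0 ∨ ρ = 1) (s : ℚ)
    (hrel : ∀ a : Fin r → ℂ, (∀ j, a j ≠ 0) →
      mtheta q δ γ z t (fun j => a j * ((q : ℂ) ^ (α j)))
        = (-1 : ℂ) ^ ρ * (∏ j, a j ^ (-(w j))) * ((q ^ (-(s : ℝ)) : ℝ) : ℂ)
            * mtheta q δ γ z t a) :
    ∃ υ : Fin m → ℤ, ∀ j, w j = ∑ i, υ i * γ i j :=
  contiguous_exponent_mem_lattice_general q hq0 hq1 r m δ γ hγ z t ht α w ρ s hrel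
end
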